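/- The matrix algebra Mₙ(ℂ) can be realized as a (ℤ/2)^k-graded commutative algebra (for some k, with respect to the standard scalar product) if and only if n is a power of 2. -/

import Mathlib

/-!
In a graded-commutative grading of `Mₙ(K)` the degree-zero part is central, hence scalar. A nonzero
homogeneous `a` squares into degree zero, and `a * a ≠ 0` since otherwise `a x a = ± x a a = 0` for
every homogeneous `x`. So `a` is invertible, each nonzero component is the line `K a`, and the
degrees of the nonzero components form a subgroup `S` of `(ℤ/2)^k`: hence `n² = |S|` divides `2^k`.

Conversely, for `n = 2^m` the generalized Pauli matrices `P (a, b) = X^a Z^b` with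
`a, b ∈ (ℤ/2)^m` form a basis of `Mₙ(K)` with `P v * P w = (-1)^(v.2 ⬝ᵥ w.1) • P (v + w)`, so two
of them commute up to the sign of the symplectic form `v.1 ⬝ᵥ w.2 + v.2 ⬝ᵥ w.1`. Grading
`P (a, b)` by `(a, a + b, b) ∈ (ℤ/2)^(3m)` turns this form into the standard scalar product.
-/

open Module Matrix

def IsGradedCommutative {A σ : Type*} [Ring A] [SetLike σ A] {k : ℕ}
    (𝒜 : (Fin k → ZMod 2) → σ) : Prop :=
  ∀ (γ γ' : Fin k → ZMod 2) (a b : A), a ∈ 𝒜 γ → b ∈ 𝒜 γ' →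
    a * b = (-1 : A) ^ (γ ⬝ᵥ γ').val * (b * a)

theorem Matrix.eq_zero_of_forall_mul_mul_eq_zero {n α : Type*} [Fintype n] [DecidableEq n]
    [CommSemiring α] [NoZeroDivisors α] {a : Matrix n n α} (h : ∀ x, a * x * a = 0) : a = 0 := by
  ext p q
  have hpq := congrFun (congrFun (h (single q p 1)) p) q
  simpa [mul_apply, single, Finset.sum_ite_eq, ite_and, mul_ite, ite_mul] using hpq

section Ring

variable {A σ : Type*} [Ring A] [SetLike σ A] [AddSubgroupClass σ A] {k : ℕ}
  {𝒜 : (Fin k → ZMod 2) → σ} [GradedRing 𝒜] {γ : Fin k → ZMod 2} {a b : A}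

theorem mul_mem_graded_zero (ha : a ∈ 𝒜 γ) (hb : b ∈ 𝒜 γ) : a * b ∈ 𝒜 0 := by
  simpa [ZModModule.add_self] using SetLike.mul_mem_graded ha hb

namespace IsGradedCommutative

variable (h𝒜 : IsGradedCommutative 𝒜)
include h𝒜

theorem commute_of_mem_zero (ha : a ∈ 𝒜 0) (b : A) : Commute a b := by
  induction b using DirectSum.Decomposition.inductionOn 𝒜 with
  | zero => exact Commute.zero_right a
  | homogeneous x => simpa [Commute, SemiconjBy] using h𝒜 0 _ a x ha x.2
  | add x y hx hy => exact hx.add_right hy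

theorem mul_mul_eq_zero (ha : a ∈ 𝒜 γ) (haa : a * a = 0) (x : A) : a * x * a = 0 := by
  induction x using DirectSum.Decomposition.inductionOn 𝒜 with
  | zero => simp
  | homogeneous x => rw [h𝒜 γ _ a x ha x.2, mul_assoc, mul_assoc, haa, mul_zero, mul_zero]
  | add x y hx hy => rw [mul_add, add_mul, hx, hy, add_zero]

end IsGradedCommutative

end Ring

namespace IsGradedCommutative

variable {K n : Type*} [Field K] [Fintype n] [DecidableEq n] {k : ℕ}
  {𝒜 : (Fin k → ZMod 2) → Submodule K (Matrix n n K)} [GradedAlgebra 𝒜]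
  {γ : Fin k → ZMod 2} {a b : Matrix n n K}
  (h𝒜 : IsGradedCommutative 𝒜)
include h𝒜

theorem exists_eq_smul_one_of_mem_zero (ha : a ∈ 𝒜 0) : ∃ c : K, a = c • 1 := by
  obtain ⟨c, hc⟩ := mem_range_scalar_of_commute_single fun _ _ _ =>
    (h𝒜.commute_of_mem_zero ha _).symm
  exact ⟨c, by rw [← hc, scalar_apply, smul_one_eq_diagonal]⟩

theorem exists_mul_self_eq_smul_one (ha : a ∈ 𝒜 γ) (ha0 : a ≠ 0) :
    ∃ c : K, c ≠ 0 ∧ a * a = c • 1 := by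
  obtain ⟨c, hc⟩ := h𝒜.exists_eq_smul_one_of_mem_zero (mul_mem_graded_zero ha ha)
  refine ⟨c, fun hc0 => ha0 ?_, hc⟩
  exact eq_zero_of_forall_mul_mul_eq_zero (h𝒜.mul_mul_eq_zero ha (by rw [hc, hc0, zero_smul]))

theorem mul_ne_zero (ha : a ∈ 𝒜 γ) (ha0 : a ≠ 0) (hb0 : b ≠ 0) : a * b ≠ 0 := by
  obtain ⟨c, hc0, hc⟩ := h𝒜.exists_mul_self_eq_smul_one ha ha0
  intro hab
  apply hb0
  calc b = c⁻¹ • (a * a * b) := by rw [hc, smul_mul_assoc, one_mul, inv_smul_smul₀ hc0]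
    _ = 0 := by rw [mul_assoc, hab, mul_zero, smul_zero]

theorem eq_span_singleton (ha : a ∈ 𝒜 γ) (ha0 : a ≠ 0) : 𝒜 γ = K ∙ a := by
  refine le_antisymm (fun x hx => ?_) ((Submodule.span_singleton_le_iff_mem _ _).2 ha)
  obtain ⟨c, hc0, hc⟩ := h𝒜.exists_mul_self_eq_smul_one ha ha0
  obtain ⟨r, hr⟩ := h𝒜.exists_eq_smul_one_of_mem_zero (mul_mem_graded_zero hx ha)
  have hcx : c • x = r • a := by
    rw [← mul_one x, ← mul_smul_comm, ← hc, ← mul_assoc, hr, smul_mul_assoc, one_mul]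
  exact Submodule.mem_span_singleton.2 ⟨c⁻¹ * r, by rw [mul_smul, ← hcx, inv_smul_smul₀ hc0]⟩

theorem finrank_eq_ite : finrank K (𝒜 γ) = if 𝒜 γ ≠ ⊥ then 1 else 0 := by
  split_ifs with hγ
  · obtain ⟨a, ha, ha0⟩ := (Submodule.ne_bot_iff _).1 hγ
    rw [h𝒜.eq_span_singleton ha ha0, finrank_span_singleton ha0]
  · simp_all

def support [Nonempty n] : AddSubgroup (Fin k → ZMod 2) where
  carrier := {γ | 𝒜 γ ≠ ⊥}
  zero_mem' := (Submodule.ne_bot_iff _).2 ⟨1, SetLike.one_mem_graded 𝒜, one_ne_zero⟩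
  add_mem' {γ γ'} hγ hγ' := by
    obtain ⟨a, ha, ha0⟩ := (Submodule.ne_bot_iff _).1 hγ
    obtain ⟨b, hb, hb0⟩ := (Submodule.ne_bot_iff _).1 hγ'
    exact (Submodule.ne_bot_iff _).2
      ⟨a * b, SetLike.mul_mem_graded ha hb, h𝒜.mul_ne_zero ha ha0 hb0⟩
  neg_mem' := by simp [ZModModule.neg_eq_self]

theorem mem_support [Nonempty n] : γ ∈ h𝒜.support ↔ 𝒜 γ ≠ ⊥ := Iff.rfl

theorem card_mul_card_dvd [Nonempty n] : Fintype.card n * Fintype.card n ∣ 2 ^ k := by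
  classical
  have hcard : Fintype.card n * Fintype.card n = Nat.card h𝒜.support := calc
    Fintype.card n * Fintype.card n = finrank K (Matrix n n K) := by simp [Module.finrank_matrix]
    _ = ∑ γ, finrank K (𝒜 γ) := by
      rw [(DirectSum.decomposeLinearEquiv 𝒜).finrank_eq, Module.finrank_directSum]
    _ = Nat.card h𝒜.support := by
      simp_rw [h𝒜.finrank_eq_ite, Finset.sum_boole, Nat.cast_id, Nat.card_eq_fintype_card,
        Fintype.card_subtype, h𝒜.mem_support]
  simpa [hcard, Nat.card_eq_fintype_card] using h𝒜.support.card_addSubgroup_dvd_card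

end IsGradedCommutative

section Pauli

variable (K : Type*) [Field K] {m : ℕ}

abbrev signChar : AddChar (ZMod 2) K := AddChar.zmodChar 2 (neg_one_sq : (-1 : K) ^ 2 = 1)

variable {K}

lemma signChar_apply (t : ZMod 2) : signChar K t = (-1) ^ t.val := rfl

lemma signChar_one_ne_one [NeZero (2 : K)] : signChar K 1 ≠ 1 := by
  rw [signChar_apply, ZMod.val_one, pow_one]
  exact fun h => two_ne_zero (α := K) <| by
    rw [← one_add_one_eq_two]
    exact neg_eq_iff_add_eq_zero.1 h

def dotChar (b : Fin m → ZMod 2) : AddChar (Fin m → ZMod 2) K :=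
  (signChar K).compAddMonoidHom (AddMonoidHom.mk' (b ⬝ᵥ ·) (dotProduct_add b))

lemma dotChar_apply (b y : Fin m → ZMod 2) : dotChar (K := K) b y = signChar K (b ⬝ᵥ y) := rfl

lemma dotChar_eq_zero_iff [NeZero (2 : K)] {b : Fin m → ZMod 2} :
    dotChar (K := K) b = 0 ↔ b = 0 := by
  classical
  refine ⟨fun h => ?_, fun h => by ext y; simp [h, dotChar_apply]⟩
  by_contra hb
  obtain ⟨i, hi⟩ := Function.ne_iff.1 hb
  have := DFunLike.congr_fun h (Pi.single i 1)
  rw [dotChar_apply, dotProduct_single, mul_one,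
    (by decide : ∀ t : ZMod 2, t ≠ 0 → t = 1) _ hi] at this
  exact signChar_one_ne_one this

lemma sum_signChar_dotProduct [NeZero (2 : K)] (b : Fin m → ZMod 2) :
    ∑ y, signChar K (b ⬝ᵥ y) = if b = 0 then (2 : K) ^ m else 0 := by
  classical
  simp_rw [← dotChar_apply, AddChar.sum_eq_ite, dotChar_eq_zero_iff]
  simp

variable (K) in
def pauli (v : (Fin m → ZMod 2) × (Fin m → ZMod 2)) : Matrix (Fin m → ZMod 2) (Fin m → ZMod 2) K :=
  Matrix.of fun x y => if x = y + v.1 then signChar K (v.2 ⬝ᵥ y) else 0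

lemma pauli_zero : pauli K (0 : (Fin m → ZMod 2) × (Fin m → ZMod 2)) = 1 := by
  ext x y
  simp [pauli, Matrix.one_apply]

lemma pauli_mul (v w : (Fin m → ZMod 2) × (Fin m → ZMod 2)) :
    pauli K v * pauli K w = signChar K (v.2 ⬝ᵥ w.1) • pauli K (v + w) := by
  ext x y
  rw [mul_apply, Finset.sum_eq_single (y + w.1) (fun z _ hz => by simp [pauli, hz]) (by simp)]
  simp only [pauli, of_apply, Matrix.smul_apply, smul_eq_mul, if_pos, Prod.fst_add, Prod.snd_add,
    add_dotProduct, dotProduct_add, AddChar.map_add_eq_mul, add_assoc, add_comm w.1 v.1]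
  split_ifs <;> ring

lemma trace_pauli [NeZero (2 : K)] (v : (Fin m → ZMod 2) × (Fin m → ZMod 2)) :
    trace (pauli K v) = if v = 0 then (2 : K) ^ m else 0 := by
  have h : ∀ y : Fin m → ZMod 2, y = y + v.1 ↔ v.1 = 0 := fun y => by
    rw [eq_comm, add_eq_left]
  simp only [trace, diag, pauli, of_apply, h]
  by_cases h1 : v.1 = 0
  · simp only [h1, if_true, sum_signChar_dotProduct, Prod.ext_iff, Prod.fst_zero, Prod.snd_zero]
    simp
  · simp [h1, Prod.ext_iff]

-- The Pauli matrices are orthogonal for the trace form `(M, N) ↦ trace (M * N)`.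
lemma linearIndependent_pauli [NeZero (2 : K)] : LinearIndependent K (pauli K (m := m)) := by
  rw [Fintype.linearIndependent_iff]
  intro g hg w
  have h := congrArg (fun M => trace (M * pauli K w)) hg
  have hvw : ∀ v : (Fin m → ZMod 2) × (Fin m → ZMod 2), v + w = 0 ↔ v = w := fun v => by
    rw [add_eq_zero_iff_eq_neg, ZModModule.neg_eq_self]
  simp only [Finset.sum_mul, smul_mul_assoc, pauli_mul, trace_sum, trace_smul, trace_pauli, hvw,
    smul_eq_mul, mul_ite, mul_zero, Finset.sum_ite_eq', Finset.mem_univ, if_true, zero_mul,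
    trace_zero] at h
  simpa [signChar_apply, two_ne_zero] using h

noncomputable def pauliBasis [NeZero (2 : K)] :
    Basis ((Fin m → ZMod 2) × (Fin m → ZMod 2)) K (Matrix (Fin m → ZMod 2) (Fin m → ZMod 2) K) :=
  basisOfLinearIndependentOfCardEqFinrank linearIndependent_pauli (by simp [finrank_matrix])

lemma pauliBasis_apply [NeZero (2 : K)] (v : (Fin m → ZMod 2) × (Fin m → ZMod 2)) :
    pauliBasis (K := K) v = pauli K v :=
  congrFun (coe_basisOfLinearIndependentOfCardEqFinrank _ _) v

end Pauli

namespace Module.Basis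

section Module

variable {R M ι Γ : Type*} [CommRing R] [AddCommGroup M] [Module R M]
  (b : Basis ι R M) (deg : ι → Γ)

def fiberSpan (γ : Γ) : Submodule R M := Submodule.span R (b '' (deg ⁻¹' {γ}))

theorem isInternal_fiberSpan [DecidableEq Γ] : DirectSum.IsInternal (b.fiberSpan deg) := by
  apply DirectSum.isInternal_submodule_of_iSupIndep_of_iSup_eq_top
  · intro γ
    refine (b.linearIndependent.disjoint_span_image
      (disjoint_compl_right.preimage deg : Disjoint (deg ⁻¹' {γ}) (deg ⁻¹' {γ}ᶜ))).mono_right ?_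
    exact iSup₂_le fun γ' hne => Submodule.span_mono <| Set.image_mono <|
      Set.preimage_mono <| Set.singleton_subset_iff.2 hne
  · change ⨆ γ, Submodule.span R (b '' (deg ⁻¹' {γ})) = ⊤
    rw [← Submodule.span_iUnion, ← Set.image_iUnion, ← Set.preimage_iUnion,
      Set.iUnion_singleton_eq_range, Set.range_id', Set.preimage_univ, Set.image_univ, b.span_eq]

end Module

section Algebra

variable {R A ι : Type*} [CommRing R] [Ring A] [Algebra R A] (b : Basis ι R A)

theorem gradedMonoid_fiberSpan {Γ : Type*} [AddMonoid Γ] (deg : ι → Γ)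
    (hone : (1 : A) ∈ b.fiberSpan deg 0)
    (hmul : ∀ i j, b i * b j ∈ b.fiberSpan deg (deg i + deg j)) :
    SetLike.GradedMonoid (b.fiberSpan deg) where
  one_mem := hone
  mul_mem γ γ' x y hx hy := by
    have hxy := Submodule.mul_mem_mul hx hy
    rw [fiberSpan, fiberSpan, Submodule.span_mul_span] at hxy
    refine Submodule.span_le.2 ?_ hxy
    rintro _ ⟨_, ⟨i, rfl, rfl⟩, _, ⟨j, rfl, rfl⟩, rfl⟩
    exact hmul i j

theorem isGradedCommutative_fiberSpan {k : ℕ} (deg : ι → Fin k → ZMod 2)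
    (hcomm : ∀ i j, b i * b j = (-1 : A) ^ (deg i ⬝ᵥ deg j).val * (b j * b i)) :
    IsGradedCommutative (b.fiberSpan deg) := by
  intro γ γ' x y hx hy
  induction hx, hy using Submodule.span_induction₂ with
  | mem_mem _ _ hx hy =>
    obtain ⟨i, rfl, rfl⟩ := hx
    obtain ⟨j, rfl, rfl⟩ := hy
    exact hcomm i j
  | zero_left => simp
  | zero_right => simp
  | add_left _ _ _ _ _ _ h₁ h₂ => rw [add_mul, h₁, h₂, mul_add, mul_add]
  | add_right _ _ _ _ _ _ h₁ h₂ => rw [mul_add, h₁, h₂, add_mul, mul_add]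
  | smul_left _ _ _ _ _ h => rw [smul_mul_assoc, h, mul_smul_comm, mul_smul_comm]
  | smul_right _ _ _ _ _ h => rw [mul_smul_comm, h, smul_mul_assoc, mul_smul_comm]

end Algebra

end Module.Basis

section SymplecticEmbedding

lemma Fin.append_add {α : Type*} [Add α] {m n : ℕ} (u u' : Fin m → α) (v v' : Fin n → α) :
    Fin.append (u + u') (v + v') = Fin.append u v + Fin.append u' v' := by
  ext i
  cases i using Fin.addCases <;> simp

lemma Fin.append_zero {α : Type*} [Zero α] {m n : ℕ} :
    Fin.append (0 : Fin m → α) (0 : Fin n → α) = 0 := by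
  ext i
  cases i using Fin.addCases <;> simp

lemma Fin.append_dotProduct_append {α : Type*} [Mul α] [AddCommMonoid α] {m n : ℕ}
    (u u' : Fin m → α) (v v' : Fin n → α) :
    Fin.append u v ⬝ᵥ Fin.append u' v' = u ⬝ᵥ u' + v ⬝ᵥ v' := by
  simp [dotProduct, Fin.sum_univ_add]

variable {m : ℕ}

def symplecticEmbedding (v : (Fin m → ZMod 2) × (Fin m → ZMod 2)) : Fin (m + (m + m)) → ZMod 2 :=
  Fin.append v.1 (Fin.append (v.1 + v.2) v.2)

lemma symplecticEmbedding_zero :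
    symplecticEmbedding (0 : (Fin m → ZMod 2) × (Fin m → ZMod 2)) = 0 := by
  simp [symplecticEmbedding, Fin.append_zero]

lemma symplecticEmbedding_add (v w : (Fin m → ZMod 2) × (Fin m → ZMod 2)) :
    symplecticEmbedding (v + w) = symplecticEmbedding v + symplecticEmbedding w := by
  simp only [symplecticEmbedding, Prod.fst_add, Prod.snd_add, ← Fin.append_add, add_add_add_comm]

-- The terms `v.1 ⬝ᵥ w.1` and `v.2 ⬝ᵥ w.2` occur twice and cancel mod 2.
lemma symplecticEmbedding_dotProduct (v w : (Fin m → ZMod 2) × (Fin m → ZMod 2)) :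
    symplecticEmbedding v ⬝ᵥ symplecticEmbedding w = v.1 ⬝ᵥ w.2 + v.2 ⬝ᵥ w.1 := by
  simp only [symplecticEmbedding, Fin.append_dotProduct_append, add_dotProduct, dotProduct_add]
  ring_nf; reduce_mod_char

end SymplecticEmbedding

section PauliGrading

variable {K A : Type*} [Field K] [Ring A] [Algebra K A] {m : ℕ}

lemma neg_one_pow_mul_eq_smul (t : ℕ) (x : A) : (-1 : A) ^ t * x = ((-1 : K) ^ t) • x := by
  rw [Algebra.smul_def, map_pow, map_neg, map_one]

theorem exists_isGradedCommutative_of_pauli_relations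
    (b : Basis ((Fin m → ZMod 2) × (Fin m → ZMod 2)) K A) (hone : b 0 = 1)
    (hmul : ∀ v w, b v * b w = signChar K (v.2 ⬝ᵥ w.1) • b (v + w)) :
    ∃ (k : ℕ) (𝒜 : (Fin k → ZMod 2) → Submodule K A),
      Nonempty (GradedAlgebra 𝒜) ∧ IsGradedCommutative 𝒜 := by
  have hmem (v) : b v ∈ b.fiberSpan symplecticEmbedding (symplecticEmbedding v) :=
    Submodule.subset_span ⟨v, rfl, rfl⟩
  have : SetLike.GradedMonoid (b.fiberSpan symplecticEmbedding) :=
    b.gradedMonoid_fiberSpan _ (hone ▸ symplecticEmbedding_zero (m := m) ▸ hmem 0) fun v w => by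
      rw [hmul, ← symplecticEmbedding_add]
      exact Submodule.smul_mem _ _ (hmem _)
  refine ⟨_, _, ⟨(b.isInternal_fiberSpan symplecticEmbedding).gradedAlgebra⟩,
    b.isGradedCommutative_fiberSpan _ fun v w => ?_⟩
  rw [hmul, hmul, add_comm w, symplecticEmbedding_dotProduct, neg_one_pow_mul_eq_smul (K := K),
    smul_smul, ← signChar_apply, ← AddChar.map_add_eq_mul, dotProduct_comm v.1, add_right_comm,
    CharTwo.add_self_eq_zero, zero_add]

theorem exists_isGradedCommutative_matrix_two_pow [NeZero (2 : K)] (m : ℕ) :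
    ∃ (k : ℕ) (𝒜 : (Fin k → ZMod 2) → Submodule K (Matrix (Fin (2 ^ m)) (Fin (2 ^ m)) K)),
      Nonempty (GradedAlgebra 𝒜) ∧ IsGradedCommutative 𝒜 := by
  let e : (Fin m → ZMod 2) ≃ Fin (2 ^ m) := Fintype.equivFinOfCardEq (by simp)
  refine exists_isGradedCommutative_of_pauli_relations
    (pauliBasis.map (reindexAlgEquiv K K e).toLinearEquiv) ?_ fun v w => ?_
  · rw [Basis.map_apply, pauliBasis_apply, pauli_zero, AlgEquiv.toLinearEquiv_apply, map_one]
  · simp only [Basis.map_apply, pauliBasis_apply, AlgEquiv.toLinearEquiv_apply, ← map_mul,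
      pauli_mul, map_smul]

end PauliGrading

/-- The matrix algebra `Mₙ(ℂ)` (`n ≥ 1`) can be realized as a
`(ℤ/2)^k`-graded commutative algebra (for some `k`, with respect to the standard
scalar product) if and only if `n` is a power of `2`. -/
theorem stmt13 (n : ℕ) (hn : 0 < n) :
    (∃ (k : ℕ) (𝒜 : (Fin k → ZMod 2) → Submodule ℂ (Matrix (Fin n) (Fin n) ℂ)),
      Nonempty (GradedAlgebra 𝒜) ∧
      ∀ (γ γ' : Fin k → ZMod 2) (a b : Matrix (Fin n) (Fin n) ℂ),
        a ∈ 𝒜 γ → b ∈ 𝒜 γ' →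
        a * b = (-1 : Matrix (Fin n) (Fin n) ℂ) ^ (∑ i, γ i * γ' i).val * (b * a)) ↔
    ∃ m : ℕ, n = 2 ^ m := by
  constructor
  · rintro ⟨k, 𝒜, ⟨_⟩, h𝒜⟩
    have : Nonempty (Fin n) := Fin.pos_iff_nonempty.1 hn
    have hdvd : n ∣ 2 ^ k := by
      simpa using dvd_of_mul_left_dvd (IsGradedCommutative.card_mul_card_dvd (𝒜 := 𝒜) h𝒜)
    obtain ⟨m, -, rfl⟩ := (Nat.dvd_prime_pow Nat.prime_two).1 hdvd
    exact ⟨m, rfl⟩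
  · rintro ⟨m, rfl⟩
    exact exists_isGradedCommutative_matrix_two_pow m
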